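/- arXiv:1812.11838 — 4 statements merged into one kernel-verified Lean document; each statement's English description precedes it below -/
import Mathlib

section
/- Let A = (D, I) be an interpretation structure and let φ and φ' be closed LTL_ss formulas. If for every finite word u ∈ Σ* it holds that ⟨u, 1 ⊨ φ⟩ = ⊤ under A if and only if ⟨u, 1 ⊨ φ'⟩ = ⊤ under A, then for every finite word u ∈ Σ* and every position n ∈ ℕ⁺ it holds that ⟨u, n ⊨ φ⟩ = ⊤ under A if and only if ⟨u, n ⊨ φ'⟩ = ⊤ under A. -/
namespace LTLss

/-- The three truth values of `LTL_ss`: true `⊤`, false `⊥`, inconclusive `?`. -/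
inductive TV : Type
  | tt : TV
  | ff : TV
  | uu : TV
  deriving DecidableEq, Repr

namespace TV

/-- Strong Kleene negation. -/
def neg : TV → TV
  | tt => ff
  | ff => tt
  | uu => uu

/-- Strong Kleene disjunction (max in the order ⊥ ≤ ? ≤ ⊤). -/
def or : TV → TV → TV
  | tt, _ => tt
  | _, tt => tt
  | uu, _ => uu
  | _, uu => uu
  | ff, ff => ff

/-- Strong Kleene conjunction (min in the order ⊥ ≤ ? ≤ ⊤). -/
def and : TV → TV → TV
  | ff, _ => ff
  | _, ff => ff
  | uu, _ => uu
  | _, uu => uu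
  | tt, tt => tt

/-- Strong Kleene implication. -/
def imp (a b : TV) : TV := (a.neg).or b

end TV

/-- Terms over variables `V` and function symbols `F` with arities `arF`;
every natural number is a 0-ary function symbol (constructor `nat`). -/
inductive Term (V F : Type) (arF : F → ℕ) : Type
  | var : V → Term V F arF
  | nat : ℕ → Term V F arF
  | app : (f : F) → (Fin (arF f) → Term V F arF) → Term V F arF

/-- Formulas of `LTL_ss` over variables `V`, function symbols `F` (arities `arF`)
and predicate symbols `P` (arities `arP`).  Timeouts of temporal connectives are
(constant) natural numbers. -/
inductive Formula (V F P : Type) (arF : F → ℕ) (arP : P → ℕ) : Type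
  | fls : Formula V F P arF arP
  | tru : Formula V F P arF arP
  | pred : (p : P) → (Fin (arP p) → Term V F arF) → Formula V F P arF arP
  | eq : Term V F arF → Term V F arF → Formula V F P arF arP
  | not : Formula V F P arF arP → Formula V F P arF arP
  | or : Formula V F P arF arP → Formula V F P arF arP → Formula V F P arF arP
  | and : Formula V F P arF arP → Formula V F P arF arP → Formula V F P arF arP
  | imp : Formula V F P arF arP → Formula V F P arF arP → Formula V F P arF arP
  | next : Formula V F P arF arP → Formula V F P arF arP
  | ev : ℕ → Formula V F P arF arP → Formula V F P arF arP
  | alw : ℕ → Formula V F P arF arP → Formula V F P arF arP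
  | untl : ℕ → Formula V F P arF arP → Formula V F P arF arP → Formula V F P arF arP
  | rel : ℕ → Formula V F P arF arP → Formula V F P arF arP → Formula V F P arF arP
  | consume : V → V → Formula V F P arF arP → Formula V F P arF arP

/-- A finite word over the alphabet `Σ = Term × ℕ` of timed terms. -/
abbrev Word (V F : Type) (arF : F → ℕ) : Type := List (Term V F arF × ℕ)

/-- An interpretation structure `A = (D, I)`: a nonempty domain `D`, an
interpretation of every natural number (0-ary function symbol), of every
function symbol, and of every predicate symbol. -/
structure Interp (F P : Type) (arF : F → ℕ) (arP : P → ℕ) : Type 1 where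
  D : Type
  nonempty : Nonempty D
  natI : ℕ → D
  fI : (f : F) → (Fin (arF f) → D) → D
  pI : (p : P) → Set (Fin (arP p) → D)

variable {V F P : Type} {arF : F → ℕ} {arP : P → ℕ}

/-- Denotation `⟦e⟧^A` of a (closed) term; variables get an irrelevant junk value. -/
noncomputable def Term.den (A : Interp F P arF arP) : Term V F arF → A.D
  | .var _ => Classical.choice A.nonempty
  | .nat n => A.natI n
  | .app f es => A.fI f fun k => Term.den A (es k)

/-- Free variables of a term. -/
def Term.fv : Term V F arF → Set V
  | .var v => {v}
  | .nat _ => ∅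
  | .app _ es => ⋃ k, Term.fv (es k)

open Classical

/-- Substitution of a term `s` for a variable `v` in a term. -/
noncomputable def Term.subst (v : V) (s : Term V F arF) : Term V F arF → Term V F arF
  | .var w => if w = v then s else .var w
  | .nat n => .nat n
  | .app f es => .app f fun k => Term.subst v s (es k)

/-- Free variables of a formula; the consume operator `λ_x^o.φ` binds `x` and `o`. -/
def Formula.fv : Formula V F P arF arP → Set V
  | .fls => ∅
  | .tru => ∅
  | .pred _ es => ⋃ k, (es k).fv
  | .eq e₁ e₂ => e₁.fv ∪ e₂.fv
  | .not φ => φ.fv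
  | .or φ ψ => φ.fv ∪ ψ.fv
  | .and φ ψ => φ.fv ∪ ψ.fv
  | .imp φ ψ => φ.fv ∪ ψ.fv
  | .next φ => φ.fv
  | .ev _ φ => φ.fv
  | .alw _ φ => φ.fv
  | .untl _ φ ψ => φ.fv ∪ ψ.fv
  | .rel _ φ ψ => φ.fv ∪ ψ.fv
  | .consume x o φ => φ.fv \ {x, o}

/-- A formula is closed if it has no free variables. -/
def Formula.closed (φ : Formula V F P arF arP) : Prop := φ.fv = (∅ : Set V)

/-- (Capture-avoiding-for-closed-terms) substitution `φ[v ↦ s]`. -/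
noncomputable def Formula.subst (v : V) (s : Term V F arF) :
    Formula V F P arF arP → Formula V F P arF arP
  | .fls => .fls
  | .tru => .tru
  | .pred p es => .pred p fun k => (es k).subst v s
  | .eq e₁ e₂ => .eq (e₁.subst v s) (e₂.subst v s)
  | .not φ => .not (φ.subst v s)
  | .or φ ψ => .or (φ.subst v s) (ψ.subst v s)
  | .and φ ψ => .and (φ.subst v s) (ψ.subst v s)
  | .imp φ ψ => .imp (φ.subst v s) (ψ.subst v s)
  | .next φ => .next (φ.subst v s)
  | .ev t φ => .ev t (φ.subst v s)
  | .alw t φ => .alw t (φ.subst v s)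
  | .untl t φ ψ => .untl t (φ.subst v s) (ψ.subst v s)
  | .rel t φ ψ => .rel t (φ.subst v s) (ψ.subst v s)
  | .consume x o φ => .consume x o (if v = x ∨ v = o then φ else φ.subst v s)

/-- Number of connectives of a formula (used for termination of evaluation). -/
def Formula.size : Formula V F P arF arP → ℕ
  | .fls => 0
  | .tru => 0
  | .pred _ _ => 0
  | .eq _ _ => 0
  | .not φ => φ.size + 1
  | .or φ ψ => φ.size + ψ.size + 1
  | .and φ ψ => φ.size + ψ.size + 1
  | .imp φ ψ => φ.size + ψ.size + 1
  | .next φ => φ.size + 1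
  | .ev _ φ => φ.size + 1
  | .alw _ φ => φ.size + 1
  | .untl _ φ ψ => φ.size + ψ.size + 1
  | .rel _ φ ψ => φ.size + ψ.size + 1
  | .consume _ _ φ => φ.size + 1

theorem Formula.size_subst (v : V) (s : Term V F arF) :
    ∀ φ : Formula V F P arF arP, (φ.subst v s).size = φ.size := by
  intro φ
  induction φ with
  | consume x o ψ ih =>
      simp only [Formula.subst, Formula.size]
      split <;> simp [ih]
  | _ => simp_all [Formula.subst, Formula.size]

/-- The three-valued evaluation judgment `⟨u, i ⊨ φ⟩` of `LTL_ss` under an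
interpretation structure `A`.  Positions `i` are 1-based; `u.get ⟨i-1, _⟩` is the
`i`-th letter of `u`. -/
noncomputable def eval (A : Interp F P arF arP) (u : Word V F arF) :
    ℕ → Formula V F P arF arP → TV
  | _, .fls => .ff
  | _, .tru => .tt
  | _, .pred p es => if (fun k => (es k).den A) ∈ A.pI p then .tt else .ff
  | _, .eq e₁ e₂ => if e₁.den A = e₂.den A then .tt else .ff
  | i, .not φ => (eval A u i φ).neg
  | i, .or φ ψ => (eval A u i φ).or (eval A u i ψ)
  | i, .and φ ψ => (eval A u i φ).and (eval A u i ψ)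
  | i, .imp φ ψ => (eval A u i φ).imp (eval A u i ψ)
  | i, .next φ => eval A u (i + 1) φ
  | i, .consume x o φ =>
      if h : 1 ≤ i ∧ i ≤ u.length then
        eval A u (i + 1)
          ((φ.subst x (u.get ⟨i - 1, by omega⟩).1).subst o (.nat (u.get ⟨i - 1, by omega⟩).2))
      else .uu
  | i, .ev t φ =>
      if ∃ k, i ≤ k ∧ k ≤ i + t - 1 ∧ eval A u k φ = .tt then .tt
      else if ∀ k, i ≤ k → k ≤ i + t - 1 → eval A u k φ = .ff then .ff
      else .uu
  | i, .alw t φ =>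
      if ∀ k, i ≤ k → k ≤ i + t - 1 → eval A u k φ = .tt then .tt
      else if ∃ k, i ≤ k ∧ k ≤ i + t - 1 ∧ eval A u k φ = .ff then .ff
      else .uu
  | i, .untl t φ₁ φ₂ =>
      if ∃ k, i ≤ k ∧ k ≤ i + t - 1 ∧ eval A u k φ₂ = .tt ∧
           ∀ j, i ≤ j → j < k → eval A u j φ₁ = .tt then .tt
      else if (∃ k, i ≤ k ∧ k ≤ i + t - 1 ∧ eval A u k φ₁ = .ff ∧
                 ∀ j, i ≤ j → j ≤ k → eval A u j φ₂ = .ff) ∨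
              ((∀ k, i ≤ k → k ≤ i + t - 1 → eval A u k φ₁ = .tt) ∧
               (∀ l, i ≤ l → l ≤ min (i + t - 1) u.length → eval A u l φ₂ = .ff)) then .ff
      else .uu
  | i, .rel t φ₁ φ₂ =>
      if (∃ k, i ≤ k ∧ k ≤ i + t - 1 ∧ eval A u k φ₁ = .tt ∧
            ∀ j, i ≤ j → j ≤ k → eval A u j φ₂ = .tt) ∨
         (∀ k, i ≤ k → k ≤ i + t - 1 → eval A u k φ₂ = .tt) then .tt
      else if ∃ k, i ≤ k ∧ k ≤ i + t - 1 ∧ eval A u k φ₂ = .ff ∧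
                ∀ j, i ≤ j → j < k → eval A u j φ₁ = .ff then .ff
      else .uu
termination_by _i φ => φ.size
decreasing_by all_goals (simp [Formula.size, Formula.size_subst]; try omega)

/-- `u ⊨^A φ`: the word `u` satisfies `φ` under `A`, i.e. `⟨u, 1 ⊨ φ⟩ = ⊤`. -/
def sat (A : Interp F P arF arP) (u : Word V F arF) (φ : Formula V F P arF arP) : Prop :=
  eval A u 1 φ = TV.tt

/-- A formula is timeless if it contains no temporal connective
(no `X`, `◇`, `□`, `U`, `R`, `λ`). -/
def Formula.timeless : Formula V F P arF arP → Prop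
  | .fls => True
  | .tru => True
  | .pred _ _ => True
  | .eq _ _ => True
  | .not φ => φ.timeless
  | .or φ ψ => φ.timeless ∧ ψ.timeless
  | .and φ ψ => φ.timeless ∧ ψ.timeless
  | .imp φ ψ => φ.timeless ∧ ψ.timeless
  | _ => False

/-- All the timeouts of temporal connectives occurring in the formula are
positive integer constants. -/
def Formula.posTimeouts : Formula V F P arF arP → Prop
  | .fls => True
  | .tru => True
  | .pred _ _ => True
  | .eq _ _ => True
  | .not φ => φ.posTimeouts
  | .or φ ψ => φ.posTimeouts ∧ ψ.posTimeouts
  | .and φ ψ => φ.posTimeouts ∧ ψ.posTimeouts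
  | .imp φ ψ => φ.posTimeouts ∧ ψ.posTimeouts
  | .next φ => φ.posTimeouts
  | .ev t φ => 1 ≤ t ∧ φ.posTimeouts
  | .alw t φ => 1 ≤ t ∧ φ.posTimeouts
  | .untl t φ ψ => 1 ≤ t ∧ φ.posTimeouts ∧ ψ.posTimeouts
  | .rel t φ ψ => 1 ≤ t ∧ φ.posTimeouts ∧ ψ.posTimeouts
  | .consume _ _ φ => φ.posTimeouts

/-- A formula is in next form: built only from `⊥`, `⊤`, predicate applications,
equalities, `¬`, `∨`, `∧`, `→`, `X` and the consume operator (no `◇`, `□`, `U`, `R`). -/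
def Formula.nextForm : Formula V F P arF arP → Prop
  | .fls => True
  | .tru => True
  | .pred _ _ => True
  | .eq _ _ => True
  | .not φ => φ.nextForm
  | .or φ ψ => φ.nextForm ∧ ψ.nextForm
  | .and φ ψ => φ.nextForm ∧ ψ.nextForm
  | .imp φ ψ => φ.nextForm ∧ ψ.nextForm
  | .next φ => φ.nextForm
  | .ev _ _ => False
  | .alw _ _ => False
  | .untl _ _ _ => False
  | .rel _ _ _ => False
  | .consume _ _ φ => φ.nextForm

/-- The formula contains no occurrence of the negation connective. -/
def Formula.negFree : Formula V F P arF arP → Prop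
  | .fls => True
  | .tru => True
  | .pred _ _ => True
  | .eq _ _ => True
  | .not _ => False
  | .or φ ψ => φ.negFree ∧ ψ.negFree
  | .and φ ψ => φ.negFree ∧ ψ.negFree
  | .imp φ ψ => φ.negFree ∧ ψ.negFree
  | .next φ => φ.negFree
  | .ev _ φ => φ.negFree
  | .alw _ φ => φ.negFree
  | .untl _ φ ψ => φ.negFree ∧ ψ.negFree
  | .rel _ φ ψ => φ.negFree ∧ ψ.negFree
  | .consume _ _ φ => φ.negFree

/-- `X^k ψ`: `k`-fold application of the next operator. -/
def iterNext : ℕ → Formula V F P arF arP → Formula V F P arF arP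
  | 0, ψ => ψ
  | k + 1, ψ => .next (iterNext k ψ)

/-- Right-nested disjunction of a nonempty list of formulas. -/
def orList : Formula V F P arF arP → List (Formula V F P arF arP) → Formula V F P arF arP
  | ψ, [] => ψ
  | ψ, χ :: l => .or ψ (orList χ l)

/-- Right-nested conjunction of a nonempty list of formulas. -/
def andList : Formula V F P arF arP → List (Formula V F P arF arP) → Formula V F P arF arP
  | ψ, [] => ψ
  | ψ, χ :: l => .and ψ (andList χ l)

/-- `⋁_{k=0}^{t-1} f k` (for `t ≥ 1`; `f 0` when `t ≤ 1`). -/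
def bigOr (f : ℕ → Formula V F P arF arP) (t : ℕ) : Formula V F P arF arP :=
  orList (f 0) (((List.range (t - 1)).map fun k => f (k + 1)))

/-- `⋀_{k=0}^{t-1} f k` (for `t ≥ 1`; `f 0` when `t ≤ 1`). -/
def bigAnd (f : ℕ → Formula V F P arF arP) (t : ℕ) : Formula V F P arF arP :=
  andList (f 0) (((List.range (t - 1)).map fun k => f (k + 1)))

/-- The `k`-th disjunct `ψ₁ ∧ X ψ₁ ∧ … ∧ X^{k-1} ψ₁ ∧ X^k ψ₂` of the explicit
transformation of until (just `ψ₂` for `k = 0`). -/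
def untilDisj (ψ₁ ψ₂ : Formula V F P arF arP) : ℕ → Formula V F P arF arP
  | 0 => ψ₂
  | k + 1 =>
      andList ψ₁
        ((((List.range k).map fun j => iterNext (j + 1) ψ₁)) ++ [iterNext (k + 1) ψ₂])

/-- The `k`-th disjunct `ψ₂ ∧ X ψ₂ ∧ … ∧ X^{k-1} ψ₂ ∧ X^k (ψ₁ ∧ ψ₂)` of the explicit
transformation of release (just `ψ₁ ∧ ψ₂` for `k = 0`). -/
def relDisj (ψ₁ ψ₂ : Formula V F P arF arP) : ℕ → Formula V F P arF arP
  | 0 => .and ψ₁ ψ₂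
  | k + 1 =>
      andList ψ₂
        ((((List.range k).map fun j => iterNext (j + 1) ψ₂)) ++
          [iterNext (k + 1) (.and ψ₁ ψ₂)])

/-- The explicit next transformation `nt^e`. -/
def nte : Formula V F P arF arP → Formula V F P arF arP
  | .fls => .fls
  | .tru => .tru
  | .pred p es => .pred p es
  | .eq e₁ e₂ => .eq e₁ e₂
  | .not φ => .not (nte φ)
  | .or φ ψ => .or (nte φ) (nte ψ)
  | .and φ ψ => .and (nte φ) (nte ψ)
  | .imp φ ψ => .imp (nte φ) (nte ψ)
  | .next φ => .next (nte φ)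
  | .ev t φ => bigOr (fun k => iterNext k (nte φ)) t
  | .alw t φ => bigAnd (fun k => iterNext k (nte φ)) t
  | .untl t φ₁ φ₂ => bigOr (untilDisj (nte φ₁) (nte φ₂)) t
  | .rel t φ₁ φ₂ =>
      .or (bigAnd (fun k => iterNext k (nte φ₂)) t) (bigOr (relDisj (nte φ₁) (nte φ₂)) t)
  | .consume x o φ => .consume x o (nte φ)

/-- Auxiliary recursion for `nt` on eventually: `nt(◇₁ φ) = nt φ`,
`nt(◇ₜ φ) = nt φ ∨ X nt(◇_{t-1} φ)` for `t ≥ 2`. -/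
def evAux (ψ : Formula V F P arF arP) : ℕ → Formula V F P arF arP
  | 0 => ψ
  | 1 => ψ
  | t + 2 => .or ψ (.next (evAux ψ (t + 1)))

/-- Auxiliary recursion for `nt` on always. -/
def alwAux (ψ : Formula V F P arF arP) : ℕ → Formula V F P arF arP
  | 0 => ψ
  | 1 => ψ
  | t + 2 => .and ψ (.next (alwAux ψ (t + 1)))

/-- Auxiliary recursion for `nt` on until. -/
def untlAux (ψ₁ ψ₂ : Formula V F P arF arP) : ℕ → Formula V F P arF arP
  | 0 => ψ₂
  | 1 => ψ₂
  | t + 2 => .or ψ₂ (.and ψ₁ (.next (untlAux ψ₁ ψ₂ (t + 1))))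

/-- Auxiliary recursion for `nt` on release. -/
def relAux (ψ₁ ψ₂ : Formula V F P arF arP) : ℕ → Formula V F P arF arP
  | 0 => .and ψ₁ ψ₂
  | 1 => .and ψ₁ ψ₂
  | t + 2 => .or (.and ψ₁ ψ₂) (.and ψ₂ (.next (relAux ψ₁ ψ₂ (t + 1))))

/-- The recursive next transformation `nt`. -/
def nt : Formula V F P arF arP → Formula V F P arF arP
  | .fls => .fls
  | .tru => .tru
  | .pred p es => .pred p es
  | .eq e₁ e₂ => .eq e₁ e₂
  | .not φ => .not (nt φ)
  | .or φ ψ => .or (nt φ) (nt ψ)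
  | .and φ ψ => .and (nt φ) (nt ψ)
  | .imp φ ψ => .imp (nt φ) (nt ψ)
  | .next φ => .next (nt φ)
  | .ev t φ => evAux (nt φ) t
  | .alw t φ => alwAux (nt φ) t
  | .untl t φ₁ φ₂ => untlAux (nt φ₁) (nt φ₂) t
  | .rel t φ₁ φ₂ => relAux (nt φ₁) (nt φ₂) t
  | .consume x o φ => .consume x o (nt φ)

/-- The safe word length `swl(φ)` of a formula whose temporal-connective
timeouts are positive integer constants. -/
def swl : Formula V F P arF arP → ℕ
  | .fls => 0
  | .tru => 0
  | .pred _ _ => 0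
  | .eq _ _ => 0
  | .not φ => swl φ
  | .or φ ψ => max (swl φ) (swl ψ)
  | .and φ ψ => max (swl φ) (swl ψ)
  | .imp φ ψ => max (swl φ) (swl ψ)
  | .next φ => swl φ + 1
  | .ev t φ => swl φ + (t - 1)
  | .alw t φ => swl φ + (t - 1)
  | .untl t φ ψ => max (swl φ) (swl ψ) + (t - 1)
  | .rel t φ ψ => max (swl φ) (swl ψ) + (t - 1)
  | .consume _ _ φ => swl φ + 1

/-- Letter simplification `ls^A(ψ, s)` of a formula in next form built without
negation, with a letter `s = (e, t)`. -/
noncomputable def ls (A : Interp F P arF arP) (s : Term V F arF × ℕ) :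
    Formula V F P arF arP → Formula V F P arF arP
  | .fls => .fls
  | .tru => .tru
  | .pred p es => if (fun k => (es k).den A) ∈ A.pI p then .tru else .fls
  | .eq e₁ e₂ => if e₁.den A = e₂.den A then .tru else .fls
  | .or φ ψ => .or (ls A s φ) (ls A s ψ)
  | .and φ ψ => .and (ls A s φ) (ls A s ψ)
  | .imp φ ψ => .imp (ls A s φ) (ls A s ψ)
  | .next φ => φ
  | .consume x o φ => (φ.subst x s.1).subst o (.nat s.2)
  | φ => φ


theorem shift_eval {V F P : Type} {arF : F → ℕ} {arP : P → ℕ}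
    (A : Interp F P arF arP) (u : Word V F arF) :
    ∀ (n : ℕ) (φ : Formula V F P arF arP), φ.size ≤ n →
      ∀ m i : ℕ, 1 ≤ i → eval A u (m + i) φ = eval A (u.drop m) i φ := by
  intro n
  induction n using Nat.strong_induction_on with
  | _ n ih =>
  intro φ hn m i hi
  cases φ with
  | fls => rw [eval, eval]
  | tru => rw [eval, eval]
  | pred p es => rw [eval, eval]
  | eq e₁ e₂ => rw [eval, eval]
  | not ψ =>
      rw [eval, eval,
        ih ψ.size (by simp [Formula.size] at hn; omega) ψ le_rfl m i hi]
  | or ψ₁ ψ₂ =>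
      rw [eval, eval,
        ih ψ₁.size (by simp [Formula.size] at hn; omega) ψ₁ le_rfl m i hi,
        ih ψ₂.size (by simp [Formula.size] at hn; omega) ψ₂ le_rfl m i hi]
  | and ψ₁ ψ₂ =>
      rw [eval, eval,
        ih ψ₁.size (by simp [Formula.size] at hn; omega) ψ₁ le_rfl m i hi,
        ih ψ₂.size (by simp [Formula.size] at hn; omega) ψ₂ le_rfl m i hi]
  | imp ψ₁ ψ₂ =>
      rw [eval, eval,
        ih ψ₁.size (by simp [Formula.size] at hn; omega) ψ₁ le_rfl m i hi,
        ih ψ₂.size (by simp [Formula.size] at hn; omega) ψ₂ le_rfl m i hi]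
  | next ψ =>
      rw [eval, eval]
      exact ih ψ.size (by simp [Formula.size] at hn; omega) ψ le_rfl m (i + 1) (by omega)
  | consume x o ψ =>
      rw [eval, eval]
      have hsz : ψ.size < n := by simp [Formula.size] at hn; omega
      by_cases hc : 1 ≤ i ∧ i ≤ (u.drop m).length
      · have hc' : 1 ≤ m + i ∧ m + i ≤ u.length := by
          simp [List.length_drop] at hc; omega
        rw [dif_pos hc', dif_pos hc]
        have hget : u.get ⟨m + i - 1, by omega⟩ = (u.drop m).get ⟨i - 1, by omega⟩ := by
          simp only [List.get_eq_getElem, List.getElem_drop]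
          congr 1
          omega
        rw [hget]
        exact ih _ (by rw [Formula.size_subst, Formula.size_subst]; omega) _ le_rfl m (i + 1)
          (by omega)
      · have hc' : ¬ (1 ≤ m + i ∧ m + i ≤ u.length) := by
          simp [List.length_drop] at hc ⊢; omega
        rw [dif_neg hc', dif_neg hc]
  | ev t ψ =>
      have ihψ : ∀ k, 1 ≤ k → eval A u (m + k) ψ = eval A (u.drop m) k ψ :=
        fun k hk => ih ψ.size (by simp [Formula.size] at hn; omega) ψ le_rfl m k hk
      rw [eval, eval]
      have h1 : (∃ k, m + i ≤ k ∧ k ≤ m + i + t - 1 ∧ eval A u k ψ = .tt) ↔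
          (∃ k, i ≤ k ∧ k ≤ i + t - 1 ∧ eval A (u.drop m) k ψ = .tt) := by
        constructor
        · rintro ⟨k, h1, h2, h3⟩
          refine ⟨k - m, by omega, by omega, ?_⟩
          rw [show k = m + (k - m) by omega] at h3
          rw [← ihψ (k - m) (by omega)]; exact h3
        · rintro ⟨k, h1, h2, h3⟩
          exact ⟨m + k, by omega, by omega, by rw [ihψ k (by omega)]; exact h3⟩
      have h2 : (∀ k, m + i ≤ k → k ≤ m + i + t - 1 → eval A u k ψ = .ff) ↔
          (∀ k, i ≤ k → k ≤ i + t - 1 → eval A (u.drop m) k ψ = .ff) := by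
        constructor
        · intro H k hk1 hk2
          rw [← ihψ k (by omega)]; exact H (m + k) (by omega) (by omega)
        · intro H k hk1 hk2
          rw [show k = m + (k - m) by omega, ihψ (k - m) (by omega)]
          exact H (k - m) (by omega) (by omega)
      simp only [h1, h2]
  | alw t ψ =>
      have ihψ : ∀ k, 1 ≤ k → eval A u (m + k) ψ = eval A (u.drop m) k ψ :=
        fun k hk => ih ψ.size (by simp [Formula.size] at hn; omega) ψ le_rfl m k hk
      rw [eval, eval]
      have h1 : (∀ k, m + i ≤ k → k ≤ m + i + t - 1 → eval A u k ψ = .tt) ↔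
          (∀ k, i ≤ k → k ≤ i + t - 1 → eval A (u.drop m) k ψ = .tt) := by
        constructor
        · intro H k hk1 hk2
          rw [← ihψ k (by omega)]; exact H (m + k) (by omega) (by omega)
        · intro H k hk1 hk2
          rw [show k = m + (k - m) by omega, ihψ (k - m) (by omega)]
          exact H (k - m) (by omega) (by omega)
      have h2 : (∃ k, m + i ≤ k ∧ k ≤ m + i + t - 1 ∧ eval A u k ψ = .ff) ↔
          (∃ k, i ≤ k ∧ k ≤ i + t - 1 ∧ eval A (u.drop m) k ψ = .ff) := by
        constructor
        · rintro ⟨k, h1, h2, h3⟩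
          refine ⟨k - m, by omega, by omega, ?_⟩
          rw [show k = m + (k - m) by omega] at h3
          rw [← ihψ (k - m) (by omega)]; exact h3
        · rintro ⟨k, h1, h2, h3⟩
          exact ⟨m + k, by omega, by omega, by rw [ihψ k (by omega)]; exact h3⟩
      simp only [h1, h2]
  | untl t ψ₁ ψ₂ =>
      have ih1 : ∀ k, 1 ≤ k → eval A u (m + k) ψ₁ = eval A (u.drop m) k ψ₁ :=
        fun k hk => ih ψ₁.size (by simp [Formula.size] at hn; omega) ψ₁ le_rfl m k hk
      have ih2 : ∀ k, 1 ≤ k → eval A u (m + k) ψ₂ = eval A (u.drop m) k ψ₂ :=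
        fun k hk => ih ψ₂.size (by simp [Formula.size] at hn; omega) ψ₂ le_rfl m k hk
      rw [eval, eval]
      have h1 : (∃ k, m + i ≤ k ∧ k ≤ m + i + t - 1 ∧ eval A u k ψ₂ = .tt ∧
            ∀ j, m + i ≤ j → j < k → eval A u j ψ₁ = .tt) ↔
          (∃ k, i ≤ k ∧ k ≤ i + t - 1 ∧ eval A (u.drop m) k ψ₂ = .tt ∧
            ∀ j, i ≤ j → j < k → eval A (u.drop m) j ψ₁ = .tt) := by
        constructor
        · rintro ⟨k, h1, h2, h3, h4⟩
          refine ⟨k - m, by omega, by omega, ?_, ?_⟩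
          · rw [show k = m + (k - m) by omega] at h3
            rw [← ih2 (k - m) (by omega)]; exact h3
          · intro j hj1 hj2
            rw [← ih1 j (by omega)]; exact h4 (m + j) (by omega) (by omega)
        · rintro ⟨k, h1, h2, h3, h4⟩
          refine ⟨m + k, by omega, by omega, by rw [ih2 k (by omega)]; exact h3, ?_⟩
          intro j hj1 hj2
          rw [show j = m + (j - m) by omega, ih1 (j - m) (by omega)]
          exact h4 (j - m) (by omega) (by omega)
      have h2 : ((∃ k, m + i ≤ k ∧ k ≤ m + i + t - 1 ∧ eval A u k ψ₁ = .ff ∧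
            ∀ j, m + i ≤ j → j ≤ k → eval A u j ψ₂ = .ff) ∨
          ((∀ k, m + i ≤ k → k ≤ m + i + t - 1 → eval A u k ψ₁ = .tt) ∧
           (∀ l, m + i ≤ l → l ≤ min (m + i + t - 1) u.length → eval A u l ψ₂ = .ff))) ↔
          ((∃ k, i ≤ k ∧ k ≤ i + t - 1 ∧ eval A (u.drop m) k ψ₁ = .ff ∧
            ∀ j, i ≤ j → j ≤ k → eval A (u.drop m) j ψ₂ = .ff) ∨
          ((∀ k, i ≤ k → k ≤ i + t - 1 → eval A (u.drop m) k ψ₁ = .tt) ∧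
           (∀ l, i ≤ l → l ≤ min (i + t - 1) (u.drop m).length →
              eval A (u.drop m) l ψ₂ = .ff))) := by
        rw [List.length_drop]
        constructor
        · rintro (⟨k, h1, h2, h3, h4⟩ | ⟨h1, h2⟩)
          · left
            refine ⟨k - m, by omega, by omega, ?_, ?_⟩
            · rw [show k = m + (k - m) by omega] at h3
              rw [← ih1 (k - m) (by omega)]; exact h3
            · intro j hj1 hj2
              rw [← ih2 j (by omega)]; exact h4 (m + j) (by omega) (by omega)
          · right
            refine ⟨fun k hk1 hk2 => ?_, fun l hl1 hl2 => ?_⟩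
            · rw [← ih1 k (by omega)]; exact h1 (m + k) (by omega) (by omega)
            · rw [← ih2 l (by omega)]; exact h2 (m + l) (by omega) (by omega)
        · rintro (⟨k, h1, h2, h3, h4⟩ | ⟨h1, h2⟩)
          · left
            refine ⟨m + k, by omega, by omega,
              by rw [ih1 k (by omega)]; exact h3, ?_⟩
            intro j hj1 hj2
            rw [show j = m + (j - m) by omega, ih2 (j - m) (by omega)]
            exact h4 (j - m) (by omega) (by omega)
          · right
            refine ⟨fun k hk1 hk2 => ?_, fun l hl1 hl2 => ?_⟩
            · rw [show k = m + (k - m) by omega, ih1 (k - m) (by omega)]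
              exact h1 (k - m) (by omega) (by omega)
            · rw [show l = m + (l - m) by omega, ih2 (l - m) (by omega)]
              exact h2 (l - m) (by omega) (by omega)
      simp only [h1, h2]
  | rel t ψ₁ ψ₂ =>
      have ih1 : ∀ k, 1 ≤ k → eval A u (m + k) ψ₁ = eval A (u.drop m) k ψ₁ :=
        fun k hk => ih ψ₁.size (by simp [Formula.size] at hn; omega) ψ₁ le_rfl m k hk
      have ih2 : ∀ k, 1 ≤ k → eval A u (m + k) ψ₂ = eval A (u.drop m) k ψ₂ :=
        fun k hk => ih ψ₂.size (by simp [Formula.size] at hn; omega) ψ₂ le_rfl m k hk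
      rw [eval, eval]
      have h1 : ((∃ k, m + i ≤ k ∧ k ≤ m + i + t - 1 ∧ eval A u k ψ₁ = .tt ∧
            ∀ j, m + i ≤ j → j ≤ k → eval A u j ψ₂ = .tt) ∨
          (∀ k, m + i ≤ k → k ≤ m + i + t - 1 → eval A u k ψ₂ = .tt)) ↔
          ((∃ k, i ≤ k ∧ k ≤ i + t - 1 ∧ eval A (u.drop m) k ψ₁ = .tt ∧
            ∀ j, i ≤ j → j ≤ k → eval A (u.drop m) j ψ₂ = .tt) ∨
          (∀ k, i ≤ k → k ≤ i + t - 1 → eval A (u.drop m) k ψ₂ = .tt)) := by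
        constructor
        · rintro (⟨k, h1, h2, h3, h4⟩ | h1)
          · left
            refine ⟨k - m, by omega, by omega, ?_, ?_⟩
            · rw [show k = m + (k - m) by omega] at h3
              rw [← ih1 (k - m) (by omega)]; exact h3
            · intro j hj1 hj2
              rw [← ih2 j (by omega)]; exact h4 (m + j) (by omega) (by omega)
          · right
            intro k hk1 hk2
            rw [← ih2 k (by omega)]; exact h1 (m + k) (by omega) (by omega)
        · rintro (⟨k, h1, h2, h3, h4⟩ | h1)
          · left
            refine ⟨m + k, by omega, by omega,
              by rw [ih1 k (by omega)]; exact h3, ?_⟩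
            intro j hj1 hj2
            rw [show j = m + (j - m) by omega, ih2 (j - m) (by omega)]
            exact h4 (j - m) (by omega) (by omega)
          · right
            intro k hk1 hk2
            rw [show k = m + (k - m) by omega, ih2 (k - m) (by omega)]
            exact h1 (k - m) (by omega) (by omega)
      have h2 : (∃ k, m + i ≤ k ∧ k ≤ m + i + t - 1 ∧ eval A u k ψ₂ = .ff ∧
            ∀ j, m + i ≤ j → j < k → eval A u j ψ₁ = .ff) ↔
          (∃ k, i ≤ k ∧ k ≤ i + t - 1 ∧ eval A (u.drop m) k ψ₂ = .ff ∧
            ∀ j, i ≤ j → j < k → eval A (u.drop m) j ψ₁ = .ff) := by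
        constructor
        · rintro ⟨k, h1, h2, h3, h4⟩
          refine ⟨k - m, by omega, by omega, ?_, ?_⟩
          · rw [show k = m + (k - m) by omega] at h3
            rw [← ih2 (k - m) (by omega)]; exact h3
          · intro j hj1 hj2
            rw [← ih1 j (by omega)]; exact h4 (m + j) (by omega) (by omega)
        · rintro ⟨k, h1, h2, h3, h4⟩
          refine ⟨m + k, by omega, by omega,
            by rw [ih2 k (by omega)]; exact h3, ?_⟩
          intro j hj1 hj2
          rw [show j = m + (j - m) by omega, ih1 (j - m) (by omega)]
          exact h4 (j - m) (by omega) (by omega)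
      simp only [h1, h2]

/-- If two closed `LTL_ss` formulas evaluate to `⊤` at position 1
of exactly the same finite words (under interpretation `A`), then they evaluate to
`⊤` at every position `n ≥ 1` of exactly the same finite words. -/
theorem eq_at_one_implies_eq_at_all_positions {V F P : Type} [Denumerable V] [Denumerable F] [Denumerable P]
    {arF : F → ℕ} {arP : P → ℕ}
    (A : Interp F P arF arP) (φ φ' : Formula V F P arF arP)
    (hφ : φ.closed) (hφ' : φ'.closed)
    (h : ∀ u : Word V F arF, eval A u 1 φ = TV.tt ↔ eval A u 1 φ' = TV.tt) :
    ∀ (u : Word V F arF) (n : ℕ), 1 ≤ n →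
      (eval A u n φ = TV.tt ↔ eval A u n φ' = TV.tt) := by
  intro u n hn
  have e1 : eval A u n φ = eval A (u.drop (n - 1)) 1 φ := by
    have := shift_eval A u φ.size φ le_rfl (n - 1) 1 le_rfl
    rwa [show n - 1 + 1 = n by omega] at this
  have e2 : eval A u n φ' = eval A (u.drop (n - 1)) 1 φ' := by
    have := shift_eval A u φ'.size φ' le_rfl (n - 1) 1 le_rfl
    rwa [show n - 1 + 1 = n by omega] at this
  rw [e1, e2]
  exact h _

end LTLss
end

section
/- Let A = (D, I) be an interpretation structure, φ1 and φ2 closed LTL_ss formulas, and t ∈ ℕ⁺. Then for every finite word u ∈ Σ*, the three-valued evaluations coincide: ⟨u, 1 ⊨ φ1 Rt φ2⟩ = ⟨u, 1 ⊨ (φ2 ∧ Xφ2 ∧ … ∧ X^{t−1}φ2) ∨ ⋁_{k=0}^{t−1} (φ2 ∧ Xφ2 ∧ … ∧ X^{k−1}φ2 ∧ X^k(φ1 ∧ φ2))⟩ under A (the disjunct for k = 0 being just φ1 ∧ φ2), where X^k denotes k-fold application of X. -/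
namespace LTLss

variable {V F P : Type} {arF : F → ℕ} {arP : P → ℕ}

open Classical

lemma TV.and_eq_tt {a b : TV} : a.and b = .tt ↔ a = .tt ∧ b = .tt := by
  cases a <;> cases b <;> simp [TV.and]
lemma TV.and_eq_ff {a b : TV} : a.and b = .ff ↔ a = .ff ∨ b = .ff := by
  cases a <;> cases b <;> simp [TV.and]
lemma TV.or_eq_tt {a b : TV} : a.or b = .tt ↔ a = .tt ∨ b = .tt := by
  cases a <;> cases b <;> simp [TV.or]
lemma TV.or_eq_ff {a b : TV} : a.or b = .ff ↔ a = .ff ∧ b = .ff := by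
  cases a <;> cases b <;> simp [TV.or]

section
variable {V F P : Type} {arF : F → ℕ} {arP : P → ℕ} (A : Interp F P arF arP) (u : Word V F arF)

lemma eval_next (i : ℕ) (ψ : Formula V F P arF arP) : eval A u i (.next ψ) = eval A u (i+1) ψ := by
  simp [eval]

lemma eval_and (i : ℕ) (ψ χ : Formula V F P arF arP) :
    eval A u i (.and ψ χ) = (eval A u i ψ).and (eval A u i χ) := by
  simp [eval]

lemma eval_or (i : ℕ) (ψ χ : Formula V F P arF arP) :
    eval A u i (.or ψ χ) = (eval A u i ψ).or (eval A u i χ) := by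
  simp [eval]

lemma eval_iterNext (i k : ℕ) (ψ : Formula V F P arF arP) :
    eval A u i (iterNext k ψ) = eval A u (i + k) ψ := by
  induction k generalizing i with
  | zero => rfl
  | succ k ih => rw [iterNext, eval_next, ih]; ring_nf

lemma eval_andList_tt (i : ℕ) (ψ : Formula V F P arF arP) (l : List (Formula V F P arF arP)) :
    eval A u i (andList ψ l) = .tt ↔ eval A u i ψ = .tt ∧ ∀ χ ∈ l, eval A u i χ = .tt := by
  induction l generalizing ψ with
  | nil => simp [andList]
  | cons χ l ih =>
      rw [andList, eval_and, TV.and_eq_tt, ih]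
      simp only [List.mem_cons, forall_eq_or_imp, exists_eq_or_imp]

lemma eval_andList_ff (i : ℕ) (ψ : Formula V F P arF arP) (l : List (Formula V F P arF arP)) :
    eval A u i (andList ψ l) = .ff ↔ eval A u i ψ = .ff ∨ ∃ χ ∈ l, eval A u i χ = .ff := by
  induction l generalizing ψ with
  | nil => simp [andList]
  | cons χ l ih =>
      rw [andList, eval_and, TV.and_eq_ff, ih]
      simp only [List.mem_cons, forall_eq_or_imp, exists_eq_or_imp]

lemma eval_orList_tt (i : ℕ) (ψ : Formula V F P arF arP) (l : List (Formula V F P arF arP)) :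
    eval A u i (orList ψ l) = .tt ↔ eval A u i ψ = .tt ∨ ∃ χ ∈ l, eval A u i χ = .tt := by
  induction l generalizing ψ with
  | nil => simp [orList]
  | cons χ l ih =>
      rw [orList, eval_or, TV.or_eq_tt, ih]
      simp only [List.mem_cons, forall_eq_or_imp, exists_eq_or_imp]

lemma eval_orList_ff (i : ℕ) (ψ : Formula V F P arF arP) (l : List (Formula V F P arF arP)) :
    eval A u i (orList ψ l) = .ff ↔ eval A u i ψ = .ff ∧ ∀ χ ∈ l, eval A u i χ = .ff := by
  induction l generalizing ψ with
  | nil => simp [orList]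
  | cons χ l ih =>
      rw [orList, eval_or, TV.or_eq_ff, ih]
      simp only [List.mem_cons, forall_eq_or_imp, exists_eq_or_imp]

lemma eval_bigAnd_tt (i t : ℕ) (ht : 1 ≤ t) (f : ℕ → Formula V F P arF arP) :
    eval A u i (bigAnd f t) = .tt ↔ ∀ k < t, eval A u i (f k) = .tt := by
  rw [bigAnd, eval_andList_tt]
  simp only [List.mem_map, List.mem_range]
  constructor
  · rintro ⟨h0, h⟩ k hk
    match k with
    | 0 => exact h0
    | k + 1 => exact h _ ⟨k, by omega, rfl⟩
  · intro h
    exact ⟨h 0 ht, by rintro χ ⟨k, hk, rfl⟩; exact h _ (by omega)⟩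

lemma eval_bigAnd_ff (i t : ℕ) (ht : 1 ≤ t) (f : ℕ → Formula V F P arF arP) :
    eval A u i (bigAnd f t) = .ff ↔ ∃ k < t, eval A u i (f k) = .ff := by
  rw [bigAnd, eval_andList_ff]
  simp only [List.mem_map, List.mem_range]
  constructor
  · rintro (h0 | ⟨χ, ⟨k, hk, rfl⟩, h⟩)
    · exact ⟨0, ht, h0⟩
    · exact ⟨k + 1, by omega, h⟩
  · rintro ⟨k, hk, h⟩
    match k with
    | 0 => exact Or.inl h
    | k + 1 => exact Or.inr ⟨_, ⟨k, by omega, rfl⟩, h⟩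

lemma eval_bigOr_tt (i t : ℕ) (ht : 1 ≤ t) (f : ℕ → Formula V F P arF arP) :
    eval A u i (bigOr f t) = .tt ↔ ∃ k < t, eval A u i (f k) = .tt := by
  rw [bigOr, eval_orList_tt]
  simp only [List.mem_map, List.mem_range]
  constructor
  · rintro (h0 | ⟨χ, ⟨k, hk, rfl⟩, h⟩)
    · exact ⟨0, ht, h0⟩
    · exact ⟨k + 1, by omega, h⟩
  · rintro ⟨k, hk, h⟩
    match k with
    | 0 => exact Or.inl h
    | k + 1 => exact Or.inr ⟨_, ⟨k, by omega, rfl⟩, h⟩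

lemma eval_bigOr_ff (i t : ℕ) (ht : 1 ≤ t) (f : ℕ → Formula V F P arF arP) :
    eval A u i (bigOr f t) = .ff ↔ ∀ k < t, eval A u i (f k) = .ff := by
  rw [bigOr, eval_orList_ff]
  simp only [List.mem_map, List.mem_range]
  constructor
  · rintro ⟨h0, h⟩ k hk
    match k with
    | 0 => exact h0
    | k + 1 => exact h _ ⟨k, by omega, rfl⟩
  · intro h
    exact ⟨h 0 ht, by rintro χ ⟨k, hk, rfl⟩; exact h _ (by omega)⟩

lemma eval_relDisj_tt (i k : ℕ) (ψ₁ ψ₂ : Formula V F P arF arP) :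
    eval A u i (relDisj ψ₁ ψ₂ k) = .tt ↔
      (∀ j < k, eval A u (i + j) ψ₂ = .tt) ∧
        eval A u (i + k) ψ₁ = .tt ∧ eval A u (i + k) ψ₂ = .tt := by
  match k with
  | 0 => rw [relDisj, eval_and, TV.and_eq_tt]; simp
  | k + 1 =>
      rw [relDisj, eval_andList_tt]
      simp only [List.mem_append, List.mem_map, List.mem_range, List.mem_singleton]
      constructor
      · rintro ⟨h0, h⟩
        have hlast := h _ (Or.inr rfl)
        rw [eval_iterNext, eval_and, TV.and_eq_tt] at hlast
        refine ⟨?_, hlast.1, hlast.2⟩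
        intro j hj
        match j with
        | 0 => simpa using h0
        | j + 1 =>
            have := h _ (Or.inl ⟨j, by omega, rfl⟩)
            rwa [eval_iterNext] at this
      · rintro ⟨h2, h1, h2'⟩
        refine ⟨by simpa using h2 0 (by omega), ?_⟩
        rintro χ (⟨j, hj, rfl⟩ | rfl)
        · rw [eval_iterNext]; exact h2 _ (by omega)
        · rw [eval_iterNext, eval_and, TV.and_eq_tt]; exact ⟨h1, h2'⟩

lemma eval_relDisj_ff (i k : ℕ) (ψ₁ ψ₂ : Formula V F P arF arP) :
    eval A u i (relDisj ψ₁ ψ₂ k) = .ff ↔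
      (∃ j < k, eval A u (i + j) ψ₂ = .ff) ∨
        eval A u (i + k) ψ₁ = .ff ∨ eval A u (i + k) ψ₂ = .ff := by
  match k with
  | 0 => rw [relDisj, eval_and, TV.and_eq_ff]; simp
  | k + 1 =>
      rw [relDisj, eval_andList_ff]
      simp only [List.mem_append, List.mem_map, List.mem_range, List.mem_singleton]
      constructor
      · rintro (h0 | ⟨χ, (⟨j, hj, rfl⟩ | rfl), h⟩)
        · exact Or.inl ⟨0, by omega, by simpa using h0⟩
        · rw [eval_iterNext] at h; exact Or.inl ⟨j + 1, by omega, h⟩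
        · rw [eval_iterNext, eval_and, TV.and_eq_ff] at h; exact Or.inr h
      · rintro (⟨j, hj, h⟩ | h)
        · match j with
          | 0 => exact Or.inl (by simpa using h)
          | j + 1 => exact Or.inr ⟨_, Or.inl ⟨j, by omega, rfl⟩, by rwa [eval_iterNext]⟩
        · refine Or.inr ⟨_, Or.inr rfl, ?_⟩
          rw [eval_iterNext, eval_and, TV.and_eq_ff]; exact h
end

section
variable {V F P : Type} {arF : F → ℕ} {arP : P → ℕ} (A : Interp F P arF arP) (u : Word V F arF)

lemma eval_rel (i t : ℕ) (φ₁ φ₂ : Formula V F P arF arP) :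
    eval A u i (.rel t φ₁ φ₂) =
      if (∃ k, i ≤ k ∧ k ≤ i + t - 1 ∧ eval A u k φ₁ = .tt ∧
            ∀ j, i ≤ j → j ≤ k → eval A u j φ₂ = .tt) ∨
         (∀ k, i ≤ k → k ≤ i + t - 1 → eval A u k φ₂ = .tt) then .tt
      else if ∃ k, i ≤ k ∧ k ≤ i + t - 1 ∧ eval A u k φ₂ = .ff ∧
                ∀ j, i ≤ j → j < k → eval A u j φ₁ = .ff then .ff
      else .uu := by
  rw [eval]
end

/-- `φ₁ Rₜ φ₂` evaluates exactly as
`(φ₂ ∧ Xφ₂ ∧ … ∧ X^{t-1}φ₂) ∨ ⋁_{k=0}^{t-1} (φ₂ ∧ Xφ₂ ∧ … ∧ X^{k-1}φ₂ ∧ X^k(φ₁ ∧ φ₂))`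
(the disjunct for `k = 0` being just `φ₁ ∧ φ₂`). -/
theorem rel_eval_eq_explicit {V F P : Type} [Denumerable V] [Denumerable F] [Denumerable P]
    {arF : F → ℕ} {arP : P → ℕ}
    (A : Interp F P arF arP) (φ₁ φ₂ : Formula V F P arF arP)
    (hc₁ : φ₁.closed) (hc₂ : φ₂.closed) (t : ℕ) (ht : 1 ≤ t) :
    ∀ u : Word V F arF,
      eval A u 1 (.rel t φ₁ φ₂) =
        eval A u 1
          (.or (bigAnd (fun k => iterNext k φ₂) t) (bigOr (relDisj φ₁ φ₂) t)) := by
  intro u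
  set R := eval A u 1 (.or (bigAnd (fun k => iterNext k φ₂) t) (bigOr (relDisj φ₁ φ₂) t))
    with hR
  have htt : R = .tt ↔
      (∃ k, 1 ≤ k ∧ k ≤ 1 + t - 1 ∧ eval A u k φ₁ = .tt ∧
        ∀ j, 1 ≤ j → j ≤ k → eval A u j φ₂ = .tt) ∨
      (∀ k, 1 ≤ k → k ≤ 1 + t - 1 → eval A u k φ₂ = .tt) := by
    rw [hR, eval_or, TV.or_eq_tt, eval_bigAnd_tt A u 1 t ht, eval_bigOr_tt A u 1 t ht]
    simp only [eval_relDisj_tt, eval_iterNext]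
    constructor
    · rintro (h | ⟨k, hk, h2, h1, h2'⟩)
      · right; intro k hk1 hk2
        have := h (k - 1) (by omega)
        rwa [show 1 + (k - 1) = k by omega] at this
      · left
        refine ⟨1 + k, by omega, by omega, h1, ?_⟩
        intro j hj1 hj2
        rcases Nat.lt_or_ge j (1 + k) with hlt | hge
        · have := h2 (j - 1) (by omega)
          rwa [show 1 + (j - 1) = j by omega] at this
        · have : j = 1 + k := by omega
          rwa [this]
    · rintro (⟨k, hk1, hk2, h1, h2⟩ | h)
      · right
        refine ⟨k - 1, by omega, ?_, ?_, ?_⟩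
        · intro j hj
          exact h2 (1 + j) (by omega) (by omega)
        · rwa [show 1 + (k - 1) = k by omega]
        · have := h2 k (by omega) (by omega)
          rwa [show 1 + (k - 1) = k by omega]
      · left; intro k hk
        exact h (1 + k) (by omega) (by omega)
  have hff : R = .ff ↔
      (∃ k, 1 ≤ k ∧ k ≤ 1 + t - 1 ∧ eval A u k φ₂ = .ff ∧
        ∀ j, 1 ≤ j → j < k → eval A u j φ₁ = .ff) := by
    rw [hR, eval_or, TV.or_eq_ff, eval_bigAnd_ff A u 1 t ht, eval_bigOr_ff A u 1 t ht]
    simp only [eval_relDisj_ff, eval_iterNext]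
    constructor
    · rintro ⟨⟨k0, hk0, hffk0⟩, hall⟩
      have hex : ∃ k, k < t ∧ eval A u (1 + k) φ₂ = .ff := ⟨k0, hk0, hffk0⟩
      classical
      let m := Nat.find hex
      have hm : m < t ∧ eval A u (1 + m) φ₂ = .ff := Nat.find_spec hex
      have hmin : ∀ j < m, ¬(j < t ∧ eval A u (1 + j) φ₂ = .ff) :=
        fun j hj => Nat.find_min hex hj
      refine ⟨1 + m, by omega, by omega, hm.2, ?_⟩
      intro j hj1 hj2
      have hjm : j - 1 < m := by omega
      rcases hall (j - 1) (by omega) with (⟨j', hj', hf⟩ | hf | hf)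
      · exact absurd ⟨by omega, hf⟩ (hmin j' (by omega))
      · rwa [show 1 + (j - 1) = j by omega] at hf
      · exact absurd ⟨by omega, by rwa [show 1 + (j-1) = j by omega] at hf ⊢⟩ (hmin (j-1) hjm)
    · rintro ⟨k, hk1, hk2, h2, h1⟩
      constructor
      · exact ⟨k - 1, by omega, by rwa [show 1 + (k - 1) = k by omega]⟩
      · intro m hm
        rcases Nat.lt_trichotomy (1 + m) k with hlt | heq | hgt
        · exact Or.inr (Or.inl (h1 (1 + m) (by omega) hlt))
        · exact Or.inr (Or.inr (by rwa [heq]))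
        · exact Or.inl ⟨k - 1, by omega, by rwa [show 1 + (k - 1) = k by omega]⟩
  rw [eval_rel]
  split_ifs with h1 h2
  · exact (htt.mpr h1).symm
  · exact (hff.mpr h2).symm
  · cases hRv : R with
    | tt => exact absurd (htt.mp hRv) h1
    | ff => exact absurd (hff.mp hRv) h2
    | uu => rfl

end LTLss
end

section
/- Let A = (D, I) be an interpretation structure and φ a closed LTL_ss formula in which no variables occur in the timeouts of temporal connectives (all timeouts of ◇, □, U, R in φ are positive integer constants). Then for every finite word u ∈ Σ* with len(u) ≥ swl(φ), the evaluation of φ on u is conclusive: ⟨u, 1 ⊨ φ⟩ ∈ {⊤, ⊥} under A (the inconclusive value ? is not obtained). In other words, the safe word length swl(φ) is a sufficient word length for avoiding inconclusive evaluations. -/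
namespace LTLss

variable {V F P : Type} {arF : F → ℕ} {arP : P → ℕ}

open Classical

theorem swl_subst (v : V) (s : Term V F arF) :
    ∀ φ : Formula V F P arF arP, swl (φ.subst v s) = swl φ := by
  intro φ
  induction φ with
  | consume x o ψ ih =>
      simp only [Formula.subst, swl]
      split <;> simp [ih]
  | _ => simp_all [Formula.subst, swl]

theorem posTimeouts_subst (v : V) (s : Term V F arF) :
    ∀ φ : Formula V F P arF arP, φ.posTimeouts → (φ.subst v s).posTimeouts := by
  intro φ
  induction φ with
  | consume x o ψ ih =>
      intro h
      simp only [Formula.subst, Formula.posTimeouts]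
      split
      · exact h
      · exact ih h
  | _ => simp_all [Formula.subst, Formula.posTimeouts]

theorem conclusive_aux {V F P : Type} {arF : F → ℕ} {arP : P → ℕ}
    (A : Interp F P arF arP) :
    ∀ n : ℕ, ∀ φ : Formula V F P arF arP, φ.size ≤ n → φ.posTimeouts →
      ∀ (u : Word V F arF) (i : ℕ), 1 ≤ i → i + swl φ ≤ u.length + 1 →
        eval A u i φ = TV.tt ∨ eval A u i φ = TV.ff := by
  intro n
  induction n with
  | zero =>
      intro φ hsz hpos u i hi hlen
      cases φ with
      | fls => rw [eval]; right; rfl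
      | tru => rw [eval]; left; rfl
      | pred p es => rw [eval]; split <;> simp
      | eq e₁ e₂ => rw [eval]; split <;> simp
      | _ => simp [Formula.size] at hsz
  | succ n ih =>
      intro φ hsz hpos u i hi hlen
      cases φ with
      | fls => rw [eval]; right; rfl
      | tru => rw [eval]; left; rfl
      | pred p es => rw [eval]; split <;> simp
      | eq e₁ e₂ => rw [eval]; split <;> simp
      | not ψ =>
          rw [eval]
          rcases ih ψ (by simp [Formula.size] at hsz; omega) hpos u i hi
              (by simp only [swl] at hlen; omega) with h | h <;>
            simp [h, TV.neg]
      | or ψ₁ ψ₂ =>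
          rw [eval]
          simp only [Formula.size] at hsz
          simp only [swl] at hlen
          rcases ih ψ₁ (by omega) hpos.1 u i hi (by omega) with h1 | h1 <;>
            rcases ih ψ₂ (by omega) hpos.2 u i hi (by omega) with h2 | h2 <;>
              simp [h1, h2, TV.or]
      | and ψ₁ ψ₂ =>
          rw [eval]
          simp only [Formula.size] at hsz
          simp only [swl] at hlen
          rcases ih ψ₁ (by omega) hpos.1 u i hi (by omega) with h1 | h1 <;>
            rcases ih ψ₂ (by omega) hpos.2 u i hi (by omega) with h2 | h2 <;>
              simp [h1, h2, TV.and]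
      | imp ψ₁ ψ₂ =>
          rw [eval]
          simp only [Formula.size] at hsz
          simp only [swl] at hlen
          rcases ih ψ₁ (by omega) hpos.1 u i hi (by omega) with h1 | h1 <;>
            rcases ih ψ₂ (by omega) hpos.2 u i hi (by omega) with h2 | h2 <;>
              simp [h1, h2, TV.imp, TV.neg, TV.or]
      | next ψ =>
          rw [eval]
          exact ih ψ (by simp [Formula.size] at hsz; omega) hpos u (i + 1) (by omega)
            (by simp only [swl] at hlen; omega)
      | ev t ψ =>
          simp only [Formula.size] at hsz
          simp only [swl] at hlen
          obtain ⟨ht, hpψ⟩ := hpos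
          have H : ∀ k, i ≤ k → k ≤ i + t - 1 →
              eval A u k ψ = TV.tt ∨ eval A u k ψ = TV.ff := fun k hk1 hk2 =>
            ih ψ (by omega) hpψ u k (by omega) (by omega)
          rw [eval]
          split
          · exact Or.inl rfl
          · split
            · exact Or.inr rfl
            · rename_i h1 h2
              exfalso
              apply h2
              intro k hk1 hk2
              rcases H k hk1 hk2 with h | h
              · exact absurd ⟨k, hk1, hk2, h⟩ h1
              · exact h
      | alw t ψ =>
          simp only [Formula.size] at hsz
          simp only [swl] at hlen
          obtain ⟨ht, hpψ⟩ := hpos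
          have H : ∀ k, i ≤ k → k ≤ i + t - 1 →
              eval A u k ψ = TV.tt ∨ eval A u k ψ = TV.ff := fun k hk1 hk2 =>
            ih ψ (by omega) hpψ u k (by omega) (by omega)
          rw [eval]
          split
          · exact Or.inl rfl
          · split
            · exact Or.inr rfl
            · rename_i h1 h2
              exfalso
              apply h2
              rw [not_forall] at h1
              obtain ⟨k, hk⟩ := h1
              simp only [not_forall] at hk
              obtain ⟨hk1, hk2, hk3⟩ := hk
              rcases H k hk1 hk2 with h | h
              · exact absurd h hk3
              · exact ⟨k, hk1, hk2, h⟩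
      | untl t ψ₁ ψ₂ =>
          simp only [Formula.size] at hsz
          simp only [swl] at hlen
          obtain ⟨ht, hp₁, hp₂⟩ := hpos
          have H1 : ∀ k, i ≤ k → k ≤ i + t - 1 →
              eval A u k ψ₁ = TV.tt ∨ eval A u k ψ₁ = TV.ff := fun k hk1 hk2 =>
            ih ψ₁ (by omega) hp₁ u k (by omega) (by omega)
          have H2 : ∀ k, i ≤ k → k ≤ i + t - 1 →
              eval A u k ψ₂ = TV.tt ∨ eval A u k ψ₂ = TV.ff := fun k hk1 hk2 =>
            ih ψ₂ (by omega) hp₂ u k (by omega) (by omega)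
          rw [eval]
          split
          · exact Or.inl rfl
          · split
            · exact Or.inr rfl
            · rename_i h1 h2
              exfalso
              apply h2
              by_cases hall : ∀ k, i ≤ k → k ≤ i + t - 1 → eval A u k ψ₁ = TV.tt
              · right
                refine ⟨hall, fun l hl1 hl2 => ?_⟩
                have hl2' : l ≤ i + t - 1 := le_trans hl2 (min_le_left _ _)
                rcases H2 l hl1 hl2' with h | h
                · exact absurd ⟨l, hl1, hl2', h, fun j hj1 hj2 =>
                    hall j hj1 (by omega)⟩ h1
                · exact h
              · left
                push_neg at hall
                obtain ⟨k, hk1, hk2, hk3⟩ := hall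
                have hex : ∃ k, i ≤ k ∧ k ≤ i + t - 1 ∧ eval A u k ψ₁ = TV.ff := by
                  rcases H1 k hk1 hk2 with h | h
                  · exact absurd h hk3
                  · exact ⟨k, hk1, hk2, h⟩
                classical
                obtain ⟨hk01, hk02, hk03⟩ := Nat.find_spec hex
                have hmin := fun j (hj : j < Nat.find hex) => Nat.find_min hex hj
                set k₀ := Nat.find hex with hk₀def
                refine ⟨k₀, hk01, hk02, hk03, fun j hj1 hj2 => ?_⟩
                rcases H2 j hj1 (by omega) with h | h
                · exfalso
                  apply h1
                  refine ⟨j, hj1, by omega, h, fun j' hj'1 hj'2 => ?_⟩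
                  rcases H1 j' hj'1 (by omega) with h' | h'
                  · exact h'
                  · exact absurd ⟨hj'1, by omega, h'⟩ (hmin j' (by omega))
                · exact h
      | rel t ψ₁ ψ₂ =>
          simp only [Formula.size] at hsz
          simp only [swl] at hlen
          obtain ⟨ht, hp₁, hp₂⟩ := hpos
          have H1 : ∀ k, i ≤ k → k ≤ i + t - 1 →
              eval A u k ψ₁ = TV.tt ∨ eval A u k ψ₁ = TV.ff := fun k hk1 hk2 =>
            ih ψ₁ (by omega) hp₁ u k (by omega) (by omega)
          have H2 : ∀ k, i ≤ k → k ≤ i + t - 1 →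
              eval A u k ψ₂ = TV.tt ∨ eval A u k ψ₂ = TV.ff := fun k hk1 hk2 =>
            ih ψ₂ (by omega) hp₂ u k (by omega) (by omega)
          rw [eval]
          split
          · exact Or.inl rfl
          · split
            · exact Or.inr rfl
            · rename_i h1 h2
              exfalso
              apply h2
              have hnall : ¬ ∀ k, i ≤ k → k ≤ i + t - 1 → eval A u k ψ₂ = TV.tt :=
                fun h => h1 (Or.inr h)
              push_neg at hnall
              obtain ⟨k, hk1, hk2, hk3⟩ := hnall
              have hex : ∃ k, i ≤ k ∧ k ≤ i + t - 1 ∧ eval A u k ψ₂ = TV.ff := by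
                rcases H2 k hk1 hk2 with h | h
                · exact absurd h hk3
                · exact ⟨k, hk1, hk2, h⟩
              classical
              obtain ⟨hk01, hk02, hk03⟩ := Nat.find_spec hex
              have hmin := fun j (hj : j < Nat.find hex) => Nat.find_min hex hj
              set k₀ := Nat.find hex with hk₀def
              refine ⟨k₀, hk01, hk02, hk03, fun j hj1 hj2 => ?_⟩
              rcases H1 j hj1 (by omega) with h | h
              · exfalso
                apply h1
                left
                refine ⟨j, hj1, by omega, h, fun j' hj'1 hj'2 => ?_⟩
                rcases H2 j' hj'1 (by omega) with h' | h'
                · exact h'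
                · exact absurd ⟨hj'1, by omega, h'⟩ (hmin j' (by omega))
              · exact h
      | consume x o ψ =>
          simp only [Formula.size] at hsz
          simp only [swl] at hlen
          rw [eval]
          rw [dif_pos ⟨hi, by omega⟩]
          apply ih
          · rw [Formula.size_subst, Formula.size_subst]; omega
          · exact posTimeouts_subst _ _ _ (posTimeouts_subst _ _ _ hpos)
          · omega
          · rw [swl_subst, swl_subst]; omega

/-- The safe word length is a sufficient word length for
avoiding inconclusive evaluations: for every closed formula `φ` with positive
constant timeouts and every word `u` with `len(u) ≥ swl(φ)`, the evaluation of
`φ` on `u` at position 1 is conclusive (`⊤` or `⊥`). -/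
theorem swl_conclusive {V F P : Type} [Denumerable V] [Denumerable F] [Denumerable P]
    {arF : F → ℕ} {arP : P → ℕ}
    (A : Interp F P arF arP) (φ : Formula V F P arF arP)
    (hc : φ.closed) (hpos : φ.posTimeouts) :
    ∀ u : Word V F arF, swl φ ≤ u.length →
      eval A u 1 φ = TV.tt ∨ eval A u 1 φ = TV.ff := by
  intro u hu
  exact conclusive_aux A φ.size φ le_rfl hpos u 1 le_rfl (by omega)

end LTLss
end

section
/- Let A = (D, I) be an interpretation structure, ψ a closed LTL_ss formula in next form built without the negation connective, s = (e, t) ∈ Σ a letter, and u ∈ Σ* a finite word. Then letter simplification correctly performs one step of evaluation: ⟨s·u, 1 ⊨ ψ⟩ = ⟨u, 1 ⊨ ls^A(ψ, s)⟩ under A, where s·u denotes the word whose first letter is s followed by the letters of u. -/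
namespace LTLss

variable {V F P : Type} {arF : F → ℕ} {arP : P → ℕ}

open Classical

theorem Formula.nextForm_subst (v : V) (s : Term V F arF) :
    ∀ φ : Formula V F P arF arP, φ.nextForm → (φ.subst v s).nextForm := by
  intro φ h
  induction φ with
  | consume x o ψ ih =>
      simp only [Formula.subst, Formula.nextForm] at *
      split
      · exact h
      · exact ih h
  | _ => simp_all [Formula.subst, Formula.nextForm]

theorem eval_shift (A : Interp F P arF arP) (s : Term V F arF × ℕ) (u : Word V F arF) :
    ∀ n (φ : Formula V F P arF arP), φ.size ≤ n → φ.nextForm →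
      ∀ i, 1 ≤ i → eval A (s :: u) (i + 1) φ = eval A u i φ := by
  intro n
  induction n with
  | zero =>
      intro φ hs hnf i hi
      cases φ <;> simp [Formula.size] at hs <;> simp [eval]
  | succ n ih =>
      intro φ hs hnf i hi
      cases φ with
      | fls => simp [eval]
      | tru => simp [eval]
      | pred p es => simp [eval]
      | eq e₁ e₂ => simp [eval]
      | not φ =>
          simp only [Formula.size] at hs
          simp only [Formula.nextForm] at hnf
          simp only [eval, ih φ (by omega) hnf i hi]
      | or φ ψ =>
          simp only [Formula.size] at hs
          obtain ⟨h1, h2⟩ := hnf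
          simp only [eval, ih φ (by omega) h1 i hi, ih ψ (by omega) h2 i hi]
      | and φ ψ =>
          simp only [Formula.size] at hs
          obtain ⟨h1, h2⟩ := hnf
          simp only [eval, ih φ (by omega) h1 i hi, ih ψ (by omega) h2 i hi]
      | imp φ ψ =>
          simp only [Formula.size] at hs
          obtain ⟨h1, h2⟩ := hnf
          simp only [eval, ih φ (by omega) h1 i hi, ih ψ (by omega) h2 i hi]
      | next φ =>
          simp only [Formula.size] at hs
          simp only [Formula.nextForm] at hnf
          simp only [eval]
          exact ih φ (by omega) hnf (i + 1) (by omega)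
      | consume x o φ =>
          obtain ⟨j, rfl⟩ : ∃ j, i = j + 1 := ⟨i - 1, by omega⟩
          simp only [Formula.size] at hs
          simp only [Formula.nextForm] at hnf
          simp only [eval, List.length_cons]
          by_cases hle : j + 1 ≤ u.length
          · rw [dif_pos (by omega), dif_pos (by omega)]
            have hidx : (s :: u).get ⟨j + 1 + 1 - 1, by simp; omega⟩ =
                u.get ⟨j + 1 - 1, by omega⟩ := by
              simp
            rw [hidx]
            exact ih _ (by rw [Formula.size_subst, Formula.size_subst]; omega)
              (Formula.nextForm_subst _ _ _ (Formula.nextForm_subst _ _ _ hnf)) (j + 2) (by omega)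
          · rw [dif_neg (by omega), dif_neg (by omega)]
      | ev t φ => exact absurd hnf (by simp [Formula.nextForm])
      | alw t φ => exact absurd hnf (by simp [Formula.nextForm])
      | untl t φ ψ => exact absurd hnf (by simp [Formula.nextForm])
      | rel t φ ψ => exact absurd hnf (by simp [Formula.nextForm])

/-- Letter simplification correctly performs one step of
evaluation: for a closed formula `ψ` in next form built without negation and a
letter `s`, `⟨s·u, 1 ⊨ ψ⟩ = ⟨u, 1 ⊨ ls^A(ψ, s)⟩`. -/
theorem ls_step {V F P : Type} [Denumerable V] [Denumerable F] [Denumerable P]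
    {arF : F → ℕ} {arP : P → ℕ}
    (A : Interp F P arF arP) (ψ : Formula V F P arF arP)
    (hc : ψ.closed) (hnf : ψ.nextForm) (hneg : ψ.negFree)
    (s : Term V F arF × ℕ) :
    ∀ u : Word V F arF, eval A (s :: u) 1 ψ = eval A u 1 (ls A s ψ) := by
  intro u
  clear hc
  induction ψ with
  | fls => simp [eval, ls]
  | tru => simp [eval, ls]
  | pred p es => simp only [eval, ls]; split <;> simp [eval]
  | eq e₁ e₂ => simp only [eval, ls]; split <;> simp [eval]
  | not φ ih => exact absurd hneg (by simp [Formula.negFree])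
  | or φ ψ ih1 ih2 =>
      obtain ⟨h1, h2⟩ := hnf
      obtain ⟨g1, g2⟩ := hneg
      simp only [eval, ls, ih1 h1 g1, ih2 h2 g2]
  | and φ ψ ih1 ih2 =>
      obtain ⟨h1, h2⟩ := hnf
      obtain ⟨g1, g2⟩ := hneg
      simp only [eval, ls, ih1 h1 g1, ih2 h2 g2]
  | imp φ ψ ih1 ih2 =>
      obtain ⟨h1, h2⟩ := hnf
      obtain ⟨g1, g2⟩ := hneg
      simp only [eval, ls, ih1 h1 g1, ih2 h2 g2]
  | next φ ih =>
      simp only [eval, ls]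
      exact eval_shift A s u φ.size φ le_rfl hnf 1 le_rfl
  | consume x o φ ih =>
      simp only [eval, ls, List.length_cons]
      rw [dif_pos (by omega)]
      simp only [Formula.nextForm] at hnf
      have hget : (s :: u).get ⟨1 - 1, by simp⟩ = s := rfl
      rw [hget]
      exact eval_shift A s u ((φ.subst x s.1).subst o (Term.nat s.2)).size _ le_rfl
        (Formula.nextForm_subst _ _ _ (Formula.nextForm_subst _ _ _ hnf)) 1 le_rfl
  | ev t φ ih => exact absurd hnf (by simp [Formula.nextForm])
  | alw t φ ih => exact absurd hnf (by simp [Formula.nextForm])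
  | untl t φ ψ ih1 ih2 => exact absurd hnf (by simp [Formula.nextForm])
  | rel t φ ψ ih1 ih2 => exact absurd hnf (by simp [Formula.nextForm])

end LTLss
end
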